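/- arXiv:2011.10423 — 2 statements merged into one kernel-verified Lean document; each statement's English description precedes it below -/
import Mathlib

section
/- Let U be a nonnegative random variable with unit exponential distribution, W a random variable independent of U, and Z a random variable taking values in a finite set {z_1,...,z_L}. Let φ: {z_1,...,z_L} × ℝ₊ → ℝ₊ be strictly increasing in its second argument and set T = φ(Z,U). Define S(t,z|w) = P(T ≥ t, Z = z | W = w). Then for every u ∈ ℝ₊ and every w in the support of W, the sum over ℓ = 1,...,L of S(φ(z_ℓ,u), z_ℓ | w) equals e^{-u}. -/
open MeasureTheory ProbabilityTheory
open scoped ENNReal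

/-!
Since `φ (z ℓ)` is strictly increasing, on the event `Z = z ℓ` the condition `φ (z ℓ) u ≤ T`
is just `u ≤ U`. The events `{Z = z ℓ}` partition `Ω`, so the sum collapses to
`P(U ≥ u | W = w)`, which is `P(U ≥ u) = e^{-u}` by the independence of `U` and `W`.
-/

lemma setOf_apply_le_apply_and_eq {Ω α γ δ : Type*} [LinearOrder γ] [Preorder δ]
    (φ : α → γ → δ) {a : α} (hφ : StrictMono (φ a)) (Z : Ω → α) (U : Ω → γ) (u : γ) :
    {ω | φ a u ≤ φ (Z ω) (U ω) ∧ Z ω = a} = {ω | u ≤ U ω} ∩ Z ⁻¹' {a} := by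
  ext ω
  simp only [Set.mem_inter_iff, Set.mem_preimage, Set.mem_singleton_iff]
  constructor
  · rintro ⟨hle, rfl⟩
    exact ⟨hφ.le_iff_le.mp hle, rfl⟩
  · rintro ⟨hle, rfl⟩
    exact ⟨hφ.le_iff_le.mpr hle, rfl⟩

lemma sum_measure_inter_preimage_singleton {Ω α ι : Type*} [MeasurableSpace Ω] [Fintype ι]
    (ν : Measure Ω) (s : Set Ω) {f : Ω → α} {z : ι → α} (hz : Function.Injective z)
    (hf : ∀ ω, ∃ i, f ω = z i) (hfm : ∀ i, MeasurableSet (f ⁻¹' {z i})) :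
    ∑ i, ν (s ∩ f ⁻¹' {z i}) = ν s := by
  classical
  have hcover : f ⁻¹' ↑(Finset.univ.image z) = Set.univ := by
    ext ω
    obtain ⟨i, hi⟩ := hf ω
    simp [hi]
  calc ∑ i, ν (s ∩ f ⁻¹' {z i})
      = ∑ i, ν.restrict s (f ⁻¹' {z i}) := by
        simp only [Measure.restrict_apply (hfm _), Set.inter_comm]
    _ = ∑ b ∈ Finset.univ.image z, ν.restrict s (f ⁻¹' {b}) := by
        rw [Finset.sum_image fun i _ j _ hij => hz hij]
    _ = ν.restrict s (f ⁻¹' ↑(Finset.univ.image z)) :=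
        sum_measure_preimage_singleton _ (by simpa using hfm)
    _ = ν s := by rw [hcover, Measure.restrict_apply_univ]

lemma ProbabilityTheory.IndepFun.cond_preimage {Ω β γ : Type*} [MeasurableSpace Ω]
    [MeasurableSpace β] [MeasurableSpace γ] {μ : Measure Ω} [IsFiniteMeasure μ] {U : Ω → γ} {W : Ω → β}
    (hindep : IndepFun U W μ) (hW : Measurable W) {A : Set γ} {B : Set β}
    (hA : MeasurableSet A) (hB : MeasurableSet B) (hB0 : μ (W ⁻¹' B) ≠ 0) :
    μ[U ⁻¹' A | W ⁻¹' B] = μ (U ⁻¹' A) := by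
  rw [cond_apply (hW hB), Set.inter_comm, hindep.measure_inter_preimage_eq_mul _ _ hA hB,
    mul_comm, ENNReal.mul_inv_cancel_right hB0 (measure_ne_top μ _)]

theorem stmt0_general {Ω α β : Type*} [MeasurableSpace Ω] [MeasurableSpace α]
    [MeasurableSingletonClass α] [MeasurableSpace β] [MeasurableSingletonClass β]
    (μ : Measure Ω) [IsProbabilityMeasure μ]
    (L : ℕ) (z : Fin L → α) (hzinj : Function.Injective z)
    (U : Ω → ℝ) (W : Ω → β) (Z : Ω → α)
    (hW : Measurable W) (hZ : Measurable Z)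
    (hZsupp : ∀ ω, ∃ ℓ, Z ω = z ℓ)
    (φ : α → ℝ → ℝ) (hφ : ∀ a, StrictMono (φ a))
    (hUexp : ∀ u : ℝ, 0 ≤ u → μ {ω | u ≤ U ω} = ENNReal.ofReal (Real.exp (-u)))
    (hindep : IndepFun U W μ)
    (T : Ω → ℝ) (hT : ∀ ω, T ω = φ (Z ω) (U ω))
    (S : ℝ → α → β → ℝ≥0∞)
    (hS : ∀ t a w, S t a w = ProbabilityTheory.cond μ (W ⁻¹' {w}) {ω | t ≤ T ω ∧ Z ω = a})
    (u : ℝ) (hu : 0 ≤ u) (w : β) (hw : μ (W ⁻¹' {w}) ≠ 0) :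
    ∑ ℓ : Fin L, S (φ (z ℓ) u) (z ℓ) w = ENNReal.ofReal (Real.exp (-u)) := by
  obtain rfl : T = fun ω => φ (Z ω) (U ω) := funext hT
  calc ∑ ℓ : Fin L, S (φ (z ℓ) u) (z ℓ) w
      = ∑ ℓ : Fin L, μ[{ω | u ≤ U ω} ∩ Z ⁻¹' {z ℓ} | W ⁻¹' {w}] := by
        simp only [hS, setOf_apply_le_apply_and_eq φ (hφ _)]
    _ = μ[U ⁻¹' Set.Ici u | W ⁻¹' {w}] :=
        sum_measure_inter_preimage_singleton _ _ hzinj hZsupp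
          fun _ => hZ (measurableSet_singleton _)
    _ = μ {ω | u ≤ U ω} :=
        hindep.cond_preimage hW measurableSet_Ici (measurableSet_singleton w) hw
    _ = ENNReal.ofReal (Real.exp (-u)) := hUexp u hu

/-- With `U ~ Exp(1)`, `W` independent of `U`, `Z` taking values in the
finite set `{z 1, ..., z L}`, `φ` strictly increasing in its second argument and
`T = φ(Z, U)`, the conditional joint survival functions
`S(t, z | w) = P(T ≥ t, Z = z | W = w)` satisfy
`∑ ℓ, S(φ(z ℓ, u), z ℓ | w) = e^{-u}` for every `u ≥ 0` and every `w` with `P(W = w) > 0`. -/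
theorem stmt0 {Ω α β : Type*} [MeasurableSpace Ω] [MeasurableSpace α]
    [MeasurableSingletonClass α] [MeasurableSpace β] [MeasurableSingletonClass β]
    (μ : Measure Ω) [IsProbabilityMeasure μ]
    (L : ℕ) (z : Fin L → α) (hzinj : Function.Injective z)
    (U : Ω → ℝ) (W : Ω → β) (Z : Ω → α)
    (hU : Measurable U) (hW : Measurable W) (hZ : Measurable Z)
    (hZsupp : ∀ ω, ∃ ℓ, Z ω = z ℓ)
    (φ : α → ℝ → ℝ) (hφ : ∀ a, StrictMono (φ a))
    (hUexp : ∀ u : ℝ, 0 ≤ u → μ {ω | u ≤ U ω} = ENNReal.ofReal (Real.exp (-u)))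
    (hindep : IndepFun U W μ)
    (T : Ω → ℝ) (hT : ∀ ω, T ω = φ (Z ω) (U ω))
    (S : ℝ → α → β → ℝ≥0∞)
    (hS : ∀ t a w, S t a w = ProbabilityTheory.cond μ (W ⁻¹' {w}) {ω | t ≤ T ω ∧ Z ω = a})
    (u : ℝ) (hu : 0 ≤ u) (w : β) (hw : μ (W ⁻¹' {w}) ≠ 0) :
    ∑ ℓ : Fin L, S (φ (z ℓ) u) (z ℓ) w = ENNReal.ofReal (Real.exp (-u)) :=
  stmt0_general μ L z hzinj U W Z hW hZ hZsupp φ hφ hUexp hindep T hT S hS u hu w hw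
end

section
/- Let G(u) be the K×L matrix with entries G_{kℓ}(u) = P(Z = z_ℓ | U = u, W = w_k). Assume rank(G(u)) ≥ L for all u (so K ≥ L), φ(z_ℓ,·) is differentiable with φ'(z_ℓ,u) ≠ 0, and f(φ(z_ℓ,u), z_ℓ | w_k) · φ'(z_ℓ,u) = e^{-u} G_{kℓ}(u). If a function ψ in L²_{↑}(Z,U) satisfies Σ_{ℓ=1}^L (ψ(z_ℓ,u) − φ(z_ℓ,u)) f(φ(z_ℓ,u), z_ℓ | w_k) = 0 for all u ≥ 0 and all k = 1,...,K, then ψ(z_ℓ,u) = φ(z_ℓ,u) for all ℓ and u. -/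
/-!
Dividing the residual `ψ(z_ℓ,u) − φ(z_ℓ,u)` by `φ'(z_ℓ,u)` and using the change of variables
turns the `K` moment conditions at a fixed `u` into `e^{-u} G(u) v = 0` for the rescaled residual
vector `v`. Full column rank of `G(u)` makes `G(u)` injective, so `v = 0`, hence `ψ = φ`.
-/

open Matrix

theorem Matrix.mulVec_injective_of_card_width_le_rank {m n K : Type*} [Fintype m] [Fintype n]
    [Field K] {A : Matrix m n K} (h : Fintype.card n ≤ A.rank) :
    Function.Injective A.mulVec := by
  have hker : Module.finrank K (LinearMap.ker A.mulVecLin) = 0 := by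
    have := A.mulVecLin.finrank_range_add_finrank_ker
    rw [Module.finrank_pi] at this
    change A.rank + _ = _ at this
    omega
  rw [← Matrix.coe_mulVecLin, ← LinearMap.ker_eq_bot]
  exact Submodule.finrank_eq_zero.mp hker

theorem Matrix.mulVec_div_eq_zero_of_mul_eq_smul {m n K : Type*} [Fintype n] [Field K]
    (A : Matrix m n K) (F : m → n → K) {c : K} (hc : c ≠ 0) {d r : n → K}
    (hd : ∀ j, d j ≠ 0) (hF : ∀ k j, F k j * d j = c * A k j)
    (horth : ∀ k, ∑ j, r j * F k j = 0) :
    A *ᵥ (r / d) = 0 := by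
  ext k
  refine (mul_eq_zero.mp ?_).resolve_left hc
  calc c * (A *ᵥ (r / d)) k = ∑ j, r j * (F k j * d j) / d j := by
        simp only [mulVec, dotProduct, Finset.mul_sum, Pi.div_apply, hF]
        exact Finset.sum_congr rfl fun j _ => by ring
    _ = ∑ j, r j * F k j := by
        refine Finset.sum_congr rfl fun j _ => ?_
        rw [← mul_assoc, mul_div_cancel_right₀ _ (hd j)]
    _ = 0 := horth k

theorem stmt5_general (L K : ℕ) (G : ℝ → Matrix (Fin K) (Fin L) ℝ)
    (hrank : ∀ u : ℝ, 0 ≤ u → L ≤ (G u).rank)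
    (φ ψ : Fin L → ℝ → ℝ) (φ' : Fin L → ℝ → ℝ)
    (hφ' : ∀ ℓ u, φ' ℓ u ≠ 0)
    (f : ℝ → Fin L → Fin K → ℝ)
    (hcov : ∀ (ℓ : Fin L) (k : Fin K) (u : ℝ), 0 ≤ u →
      f (φ ℓ u) ℓ k * φ' ℓ u = Real.exp (-u) * G u k ℓ)
    (horth : ∀ (u : ℝ), 0 ≤ u → ∀ k : Fin K,
      ∑ ℓ : Fin L, (ψ ℓ u - φ ℓ u) * f (φ ℓ u) ℓ k = 0) :
    ∀ (ℓ : Fin L) (u : ℝ), 0 ≤ u → ψ ℓ u = φ ℓ u := by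
  intro ℓ u hu
  have hres : (fun j => ψ j u - φ j u) / (fun j => φ' j u) = 0 := by
    refine mulVec_injective_of_card_width_le_rank (A := G u) (by simpa using hrank u hu) ?_
    rw [mulVec_zero]
    exact (G u).mulVec_div_eq_zero_of_mul_eq_smul (fun k j => f (φ j u) j k)
      (Real.exp_ne_zero _) (hφ' · u) (fun k j => hcov j k u hu) (horth u hu)
  simpa [hφ' ℓ u, sub_eq_zero] using congrFun hres ℓ

/-- Local identification.  With `G(u)` the `K × L` matrix of conditional
treatment probabilities `G_{kℓ}(u) = P(Z = z ℓ | U = u, W = w k)`, `rank(G(u)) ≥ L`,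
`φ(z ℓ, ·)` differentiable with nonvanishing derivative `φ'`, and the change-of-variables
relation `f(φ(z ℓ,u), z ℓ | w k) · φ'(z ℓ, u) = e^{-u} G_{kℓ}(u)`: if `ψ` (strictly
increasing and differentiable in its second argument) satisfies
`∑ ℓ, (ψ(z ℓ,u) − φ(z ℓ,u)) f(φ(z ℓ,u), z ℓ | w k) = 0` for all `u ≥ 0` and all `k`,
then `ψ = φ`. -/
theorem stmt5 (L K : ℕ) (G : ℝ → Matrix (Fin K) (Fin L) ℝ)
    (hrank : ∀ u : ℝ, 0 ≤ u → L ≤ (G u).rank)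
    (φ ψ : Fin L → ℝ → ℝ) (φ' : Fin L → ℝ → ℝ)
    (hφdiff : ∀ ℓ u, HasDerivAt (φ ℓ) (φ' ℓ u) u)
    (hφ' : ∀ ℓ u, φ' ℓ u ≠ 0)
    (hψmono : ∀ ℓ, StrictMono (ψ ℓ)) (hψdiff : ∀ ℓ, Differentiable ℝ (ψ ℓ))
    (f : ℝ → Fin L → Fin K → ℝ)
    (hcov : ∀ (ℓ : Fin L) (k : Fin K) (u : ℝ), 0 ≤ u →
      f (φ ℓ u) ℓ k * φ' ℓ u = Real.exp (-u) * G u k ℓ)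
    (horth : ∀ (u : ℝ), 0 ≤ u → ∀ k : Fin K,
      ∑ ℓ : Fin L, (ψ ℓ u - φ ℓ u) * f (φ ℓ u) ℓ k = 0) :
    ∀ (ℓ : Fin L) (u : ℝ), 0 ≤ u → ψ ℓ u = φ ℓ u :=
  stmt5_general L K G hrank φ ψ φ' hφ' f hcov horth
end
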